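/- Let f: Ω → ℝ be α-Hölder. Then for every shift-invariant Borel probability measure μ on Ω and every y ∈ Ω, lim_{n→∞} (1/n) ∫_Ω S_n(f)(x_{Λ_n} y_{Λ_n^c}) dμ(x) = ∫_Ω f dμ. -/

import Mathlib

/-! Replacing the coordinates of `x` beyond `n` by those of `y` moves `σ^k x` (for `k < n`) by
at most `2^{-(n-k)}` in `d_Ω`, so by Hölder continuity the Birkhoff sums at `x_{Λ_n} y_{Λ_n^c}`
and at `x` differ by at most `Hol_α(f) ∑_j 2^{-jα}`, uniformly in `n` and `x`. Shift invariance gives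
`∫ S_n f dμ = n ∫ f dμ`, so the averaged difference is `O(1/n)`. -/

open MeasureTheory Filter
open scoped Classical

noncomputable section

namespace Paper

variable {A : Type*} [MetricSpace A] [CompactSpace A] [MeasurableSpace A] [BorelSpace A]

/-- The left shift `σ` on `Ω = Aᴺ`. -/
def shift (x : ℕ → A) : ℕ → A := fun n => x (n + 1)

/-- Prepend a symbol: `cons a x = (a, x₀, x₁, …)`. -/
def cons (a : A) (x : ℕ → A) : ℕ → A := fun n =>
  match n with
  | 0 => a
  | n + 1 => x n

/-- The metric `d_Ω` on `Ω`. -/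
def dOmega (x y : ℕ → A) : ℝ :=
  ∑' n : ℕ, (1 / 2 : ℝ) ^ (n + 1) * (dist (x n) (y n) / (1 + dist (x n) (y n)))

/-- `f` is `α`-Hölder with respect to `d_Ω`. -/
def IsHolder (α : ℝ) (f : (ℕ → A) → ℝ) : Prop :=
  ∃ C : ℝ, 0 ≤ C ∧ ∀ x y, |f x - f y| ≤ C * dOmega x y ^ α

/-- The Ruelle transfer operator with a priori measure `p`. -/
def ruelle (p : Measure A) (f φ : (ℕ → A) → ℝ) : (ℕ → A) → ℝ :=
  fun x => ∫ a, Real.exp (f (cons a x)) * φ (cons a x) ∂p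

/-- The normalized potential `f̄ = f + log h - log (h ∘ σ) - log λ`. -/
def fbar (f h : (ℕ → A) → ℝ) (lam : ℝ) : (ℕ → A) → ℝ :=
  fun x => f x + Real.log (h x) - Real.log (h (shift x)) - Real.log lam

/-- Projection on the first `n` coordinates. -/
def proj (n : ℕ) (x : ℕ → A) : Fin n → A := fun i => x i

/-- Relative entropy `H(μ|ν)` of two measures, with value `+∞` unless
`μ ≪ ν` and the entropy integral is finite. -/
def relEnt {X : Type*} [MeasurableSpace X] (μ ν : Measure X) : EReal :=
  if μ ≪ ν ∧ Integrable (fun x => Real.log (μ.rnDeriv ν x).toReal) μ then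
    ((∫ x, Real.log (μ.rnDeriv ν x).toReal ∂μ : ℝ) : EReal)
  else ⊤

/-- Relative entropy `H_{Λ_n}(μ|ν)` on the σ-algebra of the first `n` coordinates. -/
def relEntN (n : ℕ) (μ ν : Measure (ℕ → A)) : EReal :=
  relEnt (μ.map (proj n)) (ν.map (proj n))

/-- The entropy `H_{Λ_n}(μ) = -H_{Λ_n}(μ | pᴺ)` relative to the a priori measure `p`. -/
def finEnt (p : Measure A) (μ : Measure (ℕ → A)) (n : ℕ) : EReal :=
  - relEnt (μ.map (proj n)) (Measure.pi fun _ : Fin n => p)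

/-- The specific entropy `h^s(μ) = lim_n H_{Λ_n}(μ)/n` (defined as a `limsup`,
which coincides with the limit whenever the latter exists). -/
def specEnt (p : Measure A) (μ : Measure (ℕ → A)) : EReal :=
  Filter.atTop.limsup fun n : ℕ => ((n : ℝ)⁻¹ : EReal) * finEnt p μ n

/-- Birkhoff sum `S_n(f)`. -/
def birkhoff (n : ℕ) (f : (ℕ → A) → ℝ) (x : ℕ → A) : ℝ :=
  ∑ i ∈ Finset.range n, f (shift^[i] x)

/-- The configuration `x_{Λ_n} y_{Λ_n^c}`. -/
def concatAt (n : ℕ) (x y : ℕ → A) : ℕ → A := fun i => if i < n then x i else y i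

/-- Concatenation of a finite word with a configuration. -/
def wordCons (n : ℕ) (a : Fin n → A) (x : ℕ → A) : ℕ → A :=
  fun i => if h : i < n then a ⟨i, h⟩ else x (i - n)


end Paper

namespace Paper

open Finset

lemma shift_iterate_apply {A : Type*} (k : ℕ) (x : ℕ → A) (i : ℕ) :
    shift^[k] x i = x (i + k) := by
  induction k generalizing x with
  | zero => rfl
  | succ k ih => rw [Function.iterate_succ_apply, ih, shift, add_assoc]

section Topology

variable {A : Type*} [TopologicalSpace A]

lemma continuous_shift : Continuous (shift : (ℕ → A) → ℕ → A) :=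
  continuous_pi fun n => continuous_apply (n + 1)

lemma continuous_concatAt_left (n : ℕ) (y : ℕ → A) : Continuous fun x => concatAt n x y :=
  continuous_pi fun i => by
    by_cases h : i < n <;> simp only [concatAt, h, if_true, if_false]
    exacts [continuous_apply i, continuous_const]

end Topology

section Metric

variable {A : Type*} [MetricSpace A]

lemma dOmega_term_le (x y : ℕ → A) (n : ℕ) :
    (1 / 2 : ℝ) ^ (n + 1) * (dist (x n) (y n) / (1 + dist (x n) (y n))) ≤ 2⁻¹ ^ (n + 1) := by
  rw [one_div]
  refine mul_le_of_le_one_right (by positivity) (div_le_one_of_le₀ ?_ (by positivity))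
  linarith

lemma dOmega_self (x : ℕ → A) : dOmega x x = 0 := by
  simp [dOmega]

lemma dOmega_nonneg (x y : ℕ → A) : 0 ≤ dOmega x y :=
  tsum_nonneg fun n => by positivity

lemma summable_inv_two_pow_succ : Summable fun n : ℕ => (2⁻¹ : ℝ) ^ (n + 1) :=
  (summable_nat_add_iff 1).mpr (summable_geometric_of_lt_one (by norm_num) (by norm_num))

lemma continuous_dOmega {X : Type*} [TopologicalSpace X] {u v : X → ℕ → A}
    (hu : Continuous u) (hv : Continuous v) : Continuous fun t => dOmega (u t) (v t) := by
  refine continuous_tsum (fun n => ?_) summable_inv_two_pow_succ fun n t => ?_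
  · have hd : Continuous fun t => dist (u t n) (v t n) :=
      ((continuous_apply n).comp hu).dist ((continuous_apply n).comp hv)
    exact continuous_const.mul (hd.div (continuous_const.add hd) fun t => by positivity)
  · rw [Real.norm_of_nonneg (by positivity)]
    exact dOmega_term_le _ _ n

lemma dOmega_le_of_forall_lt_eq {x y : ℕ → A} {m : ℕ} (h : ∀ i < m, x i = y i) :
    dOmega x y ≤ 2⁻¹ ^ m := by
  have hbound : ∀ n, (1 / 2 : ℝ) ^ (n + 1) * (dist (x n) (y n) / (1 + dist (x n) (y n))) ≤
      2⁻¹ * if m ≤ n then (2⁻¹ : ℝ) ^ n else 0 := by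
    intro n
    split_ifs with hn
    · simpa [pow_succ, mul_comm] using dOmega_term_le x y n
    · simp [h n (not_le.mp hn)]
  calc dOmega x y ≤ ∑' n, 2⁻¹ * if m ≤ n then (2⁻¹ : ℝ) ^ n else 0 := by
        refine Summable.tsum_le_tsum hbound
          (.of_nonneg_of_le (fun n => by positivity) (dOmega_term_le x y) summable_inv_two_pow_succ)
          (.of_nonneg_of_le (fun n => by split_ifs <;> positivity)
            (fun n => by split_ifs <;> simp [pow_succ, mul_comm]) summable_inv_two_pow_succ)
    _ = 2⁻¹ ^ m := by rw [tsum_mul_left, tsum_geometric_inv_two_ge]; ring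

lemma IsHolder.continuous {α : ℝ} (hα : 0 < α) {f : (ℕ → A) → ℝ} (hf : IsHolder α f) :
    Continuous f := by
  obtain ⟨C, -, hC⟩ := hf
  refine continuous_iff_continuousAt.mpr fun x => ?_
  have hbound : Tendsto (fun y => C * dOmega y x ^ α) (nhds x) (nhds 0) := by
    have hcont : Continuous fun y => C * dOmega y x ^ α :=
      continuous_const.mul ((continuous_dOmega continuous_id continuous_const).rpow_const
        fun _ => Or.inr hα.le)
    simpa [dOmega_self, Real.zero_rpow hα.ne'] using hcont.tendsto x
  exact tendsto_iff_dist_tendsto_zero.mpr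
    (squeeze_zero (fun y => dist_nonneg) (fun y => hC y x) hbound)

lemma abs_sub_le_of_forall_lt_eq {α C : ℝ} (hα : 0 ≤ α) (hC0 : 0 ≤ C) {f : (ℕ → A) → ℝ}
    (hC : ∀ x y, |f x - f y| ≤ C * dOmega x y ^ α) {x y : ℕ → A} {m : ℕ}
    (h : ∀ i < m, x i = y i) : |f x - f y| ≤ C * (2⁻¹ ^ α) ^ m := by
  rw [Real.rpow_pow_comm (by norm_num)]
  exact (hC x y).trans (by gcongr; exacts [dOmega_nonneg x y, dOmega_le_of_forall_lt_eq h])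

end Metric

lemma sum_range_pow_sub_le {r : ℝ} (hr0 : 0 ≤ r) (hr1 : r < 1) (n : ℕ) :
    ∑ k ∈ range n, r ^ (n - k) ≤ 1 / (1 - r) :=
  calc ∑ k ∈ range n, r ^ (n - k) ≤ ∑ k ∈ range n, r ^ (n - 1 - k) :=
        sum_le_sum fun k _ => pow_le_pow_of_le_one hr0 hr1.le (by omega)
    _ = ∑ k ∈ range n, r ^ k := sum_range_reflect (r ^ ·) n
    _ ≤ 1 / (1 - r) := by simpa using geom_sum_Ico_le_of_lt_one (m := 0) (n := n) hr0 hr1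

lemma abs_birkhoff_concatAt_sub_le {A : Type*} [MetricSpace A] {α C : ℝ} (hα : 0 < α)
    (hC0 : 0 ≤ C) {f : (ℕ → A) → ℝ} (hC : ∀ x y, |f x - f y| ≤ C * dOmega x y ^ α)
    (n : ℕ) (x y : ℕ → A) :
    |birkhoff n f (concatAt n x y) - birkhoff n f x| ≤ C / (1 - 2⁻¹ ^ α) := by
  set r : ℝ := 2⁻¹ ^ α
  have hr0 : 0 ≤ r := by positivity
  have hr1 : r < 1 := Real.rpow_lt_one (by norm_num) (by norm_num) hα
  have hterm : ∀ k ∈ range n,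
      dist (f (shift^[k] (concatAt n x y))) (f (shift^[k] x)) ≤ C * r ^ (n - k) := by
    intro k hk
    refine abs_sub_le_of_forall_lt_eq hα.le hC0 hC fun i hi => ?_
    have : i + k < n := by rw [mem_range] at hk; omega
    simp [shift_iterate_apply, concatAt, this]
  calc |birkhoff n f (concatAt n x y) - birkhoff n f x|
      = dist (birkhoffSum shift f n (concatAt n x y)) (birkhoffSum shift f n x) := rfl
    _ ≤ ∑ k ∈ range n, dist (f (shift^[k] (concatAt n x y))) (f (shift^[k] x)) :=
        dist_birkhoffSum_birkhoffSum_le _ _ _ _ _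
    _ ≤ ∑ k ∈ range n, C * r ^ (n - k) := sum_le_sum hterm
    _ ≤ C * (1 / (1 - r)) := by
        rw [← mul_sum]; exact mul_le_mul_of_nonneg_left (sum_range_pow_sub_le hr0 hr1 n) hC0
    _ = C / (1 - r) := mul_one_div C _

lemma integral_birkhoffSum {X E : Type*} [MeasurableSpace X]
    [NormedAddCommGroup E] [NormedSpace ℝ E] {μ : Measure X} {T : X → X}
    (hT : MeasurePreserving T μ μ) {g : X → E} (hg : Integrable g μ) (n : ℕ) :
    ∫ x, birkhoffSum T g n x ∂μ = n • ∫ x, g x ∂μ := by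
  have hcomp : ∀ k, ∫ x, g (T^[k] x) ∂μ = ∫ x, g x ∂μ := fun k => by
    have hTk := hT.iterate k
    rw [← integral_map hTk.measurable.aemeasurable (by rw [hTk.map_eq]; exact hg.aestronglyMeasurable),
      hTk.map_eq]
  simp only [birkhoffSum]
  rw [integral_finsetSum _ fun k _ => ?_]
  · simp [hcomp]
  · exact (hT.iterate k).integrable_comp_of_integrable hg

lemma tendsto_inv_mul_of_abs_sub_mul_le {a : ℕ → ℝ} {L M : ℝ} (h : ∀ n : ℕ, |a n - n * L| ≤ M) :
    Tendsto (fun n : ℕ => (n : ℝ)⁻¹ * a n) atTop (nhds L) := by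
  rw [← tendsto_sub_nhds_zero_iff]
  refine squeeze_zero_norm' ?_ (by simpa using tendsto_inv_atTop_nhds_zero_nat.const_mul M)
  filter_upwards [eventually_ne_atTop 0] with n hn
  calc ‖(n : ℝ)⁻¹ * a n - L‖ = ‖(n : ℝ)⁻¹ * (a n - n * L)‖ := by
        congr 1; field_simp
    _ = (n : ℝ)⁻¹ * |a n - n * L| := by
        rw [norm_mul, Real.norm_of_nonneg (by positivity), Real.norm_eq_abs]
    _ ≤ M * (n : ℝ)⁻¹ := by rw [mul_comm]; exact mul_le_mul_of_nonneg_right (h n) (by positivity)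

end Paper

namespace Paper

variable {A : Type*} [MetricSpace A] [CompactSpace A] [MeasurableSpace A] [BorelSpace A]

theorem statement6_general
    (α : ℝ) (hα0 : 0 < α)
    (f : (ℕ → A) → ℝ) (hf : IsHolder α f)
    (μ : Measure (ℕ → A)) [IsProbabilityMeasure μ]
    (hinv : μ.map shift = μ) (y : ℕ → A) :
    Tendsto (fun n : ℕ => (n : ℝ)⁻¹ * ∫ x, birkhoff n f (concatAt n x y) ∂μ)
      atTop (nhds (∫ x, f x ∂μ)) := by
  have hfc : Continuous f := hf.continuous hα0
  obtain ⟨C, hC0, hC⟩ := hf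
  have hT : MeasurePreserving shift μ μ := ⟨continuous_shift.measurable, hinv⟩
  have hint : ∀ g : (ℕ → A) → ℝ, Continuous g → Integrable g μ := fun g hg =>
    hg.integrable_of_hasCompactSupport (HasCompactSupport.of_compactSpace g)
  have hbc : ∀ n, Continuous (birkhoff n f) := fun n =>
    continuous_finsetSum _ fun k _ => hfc.comp (continuous_shift.iterate k)
  refine tendsto_inv_mul_of_abs_sub_mul_le (M := C / (1 - 2⁻¹ ^ α)) fun n => ?_
  rw [← nsmul_eq_mul, ← integral_birkhoffSum hT (hint f hfc),
    ← integral_sub (hint (fun x => birkhoff n f (concatAt n x y))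
      ((hbc n).comp (continuous_concatAt_left n y))) (hint (birkhoffSum shift f n) (hbc n)),
    ← Real.norm_eq_abs]
  refine (norm_integral_le_of_norm_le_const (C := C / (1 - 2⁻¹ ^ α))
    (.of_forall fun x => ?_)).trans_eq (by simp)
  exact abs_birkhoff_concatAt_sub_le hα0 hC0 hC n x y

/-- If `f` is `α`-Hölder then for every shift-invariant Borel probability
measure `μ` and every `y ∈ Ω`,
`lim_n (1/n) ∫ S_n(f)(x_{Λ_n} y_{Λ_n^c}) dμ(x) = ∫ f dμ`. -/
theorem statement6
    (α : ℝ) (hα0 : 0 < α) (hα1 : α < 1)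
    (f : (ℕ → A) → ℝ) (hf : IsHolder α f)
    (μ : Measure (ℕ → A)) [IsProbabilityMeasure μ]
    (hinv : μ.map shift = μ) (y : ℕ → A) :
    Tendsto (fun n : ℕ => (n : ℝ)⁻¹ * ∫ x, birkhoff n f (concatAt n x y) ∂μ)
      atTop (nhds (∫ x, f x ∂μ)) :=
  statement6_general α hα0 f hf μ hinv y

end Paper
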